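/- Let X ⊆ ℝ^d be a nonempty closed set with reach at least τ > 0 (every z with infDist(z, X) < τ has a unique nearest point in X). Let σ = {x_1, …, x_k} ⊆ ℝ^d, set ε_σ := max_i d_X(x_i), and let b ∈ ℝ^d and r_σ > 0 satisfy ‖b − x‖ ≤ r_σ for all x ∈ σ and r_σ < τ − ε_σ. Let ς ⊆ σ be nonempty and let b' ∈ convexHull ℝ (ς) satisfy ‖b' − x‖ ≤ r_σ for all x ∈ ς. Let ε > 0 and let y, y' ∈ ℝ^d satisfy ‖y − π_X(b)‖ < ε and ‖y' − π_X(b')‖ < ε. Then ‖y' − y‖ < √( 2τ·(r_σ² + ε_σ(2τ − ε_σ)) / (τ + √(τ² − (r_σ² + ε_σ(2τ − ε_σ)))) ) + 2ε. -/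

import Mathlib

open Metric Filter Finset Topology RealInnerProductSpace

/-- Near-equality in the triangle inequality forces near-parallelism (quantitative). -/
lemma aux_par {d : ℕ} (a bb : EuclideanSpace ℝ (Fin d)) (η : ℝ)
    (ha : 0 < ‖a‖) (hη : 0 ≤ η) (hη2 : η ≤ ‖a‖ + ‖bb‖)
    (h : ‖a‖ + ‖bb‖ - η ≤ ‖a + bb‖) :
    ‖bb - (‖bb‖ / ‖a‖) • a‖ ^ 2 ≤ 2 * ‖bb‖ * η * (‖a‖ + ‖bb‖) / ‖a‖ := by
  have hinner : ‖a‖ * ‖bb‖ - η * (‖a‖ + ‖bb‖) ≤ ⟪a, bb⟫ := by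
    have h0 : (0:ℝ) ≤ ‖a‖ + ‖bb‖ - η := by linarith
    have h1 : (‖a‖ + ‖bb‖ - η) ^ 2 ≤ ‖a + bb‖ ^ 2 := pow_le_pow_left₀ h0 h 2
    have h2 : ‖a + bb‖ ^ 2 = ‖a‖ ^ 2 + 2 * ⟪a, bb⟫ + ‖bb‖ ^ 2 := norm_add_sq_real a bb
    nlinarith [h1, h2]
  have hexp : ‖bb - (‖bb‖ / ‖a‖) • a‖ ^ 2
      = 2 * ‖bb‖ ^ 2 - 2 * (‖bb‖ / ‖a‖) * ⟪a, bb⟫ := by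
    have e1 : ‖bb - (‖bb‖ / ‖a‖) • a‖ ^ 2
        = ‖bb‖ ^ 2 - 2 * ⟪bb, (‖bb‖ / ‖a‖) • a⟫ + ‖(‖bb‖ / ‖a‖) • a‖ ^ 2 :=
      norm_sub_sq_real _ _
    have e2 : ⟪bb, (‖bb‖ / ‖a‖) • a⟫ = (‖bb‖ / ‖a‖) * ⟪a, bb⟫ := by
      rw [real_inner_smul_right, real_inner_comm]
    have e3 : ‖(‖bb‖ / ‖a‖) • a‖ ^ 2 = ‖bb‖ ^ 2 := by
      rw [norm_smul, Real.norm_eq_abs, abs_of_nonneg (by positivity), mul_pow]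
      field_simp
    rw [e1, e2, e3]; ring
  rw [hexp, le_div_iff₀ ha]
  have key : (2 * ‖bb‖ ^ 2 - 2 * (‖bb‖ / ‖a‖) * ⟪a, bb⟫) * ‖a‖
      = 2 * ‖bb‖ ^ 2 * ‖a‖ - 2 * ‖bb‖ * ⟪a, bb⟫ := by
    field_simp
  rw [key]
  nlinarith [mul_nonneg (norm_nonneg bb) (sub_nonneg.2 hinner)]

/-- Uniform continuity, on a compact subset of the tube, of the unit "outward direction"
field `w ↦ (d(w))⁻¹ (w - P w)`, where `P` is a nearest-point selection. -/
lemma nf_unif_cont {d : ℕ} {X : Set (EuclideanSpace ℝ (Fin d))}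
    (hXcl : IsClosed X) (τ : ℝ)
    (hreach : ∀ z : EuclideanSpace ℝ (Fin d), Metric.infDist z X < τ →
      ∃! p, p ∈ X ∧ dist z p = Metric.infDist z X)
    (P : EuclideanSpace ℝ (Fin d) → EuclideanSpace ℝ (Fin d))
    (hPmem : ∀ w, P w ∈ X) (hPdist : ∀ w, Metric.infDist w X = dist w (P w))
    (K : Set (EuclideanSpace ℝ (Fin d))) (hK : IsCompact K)
    (ρ τ'' : ℝ) (hρ : 0 < ρ) (hτ'' : τ'' < τ)
    (hKlo : ∀ w ∈ K, ρ ≤ Metric.infDist w X) (hKhi : ∀ w ∈ K, Metric.infDist w X ≤ τ'')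
    (ε₁ : ℝ) (hε₁ : 0 < ε₁) :
    ∃ η > 0, ∀ v ∈ K, ∀ w ∈ K, dist v w ≤ η →
      ‖(Metric.infDist v X)⁻¹ • (v - P v) - (Metric.infDist w X)⁻¹ • (w - P w)‖ ≤ ε₁ := by
  by_contra hcon
  push_neg at hcon
  have hseq : ∀ n : ℕ, ∃ v, v ∈ K ∧ ∃ w, w ∈ K ∧ dist v w ≤ 1 / (n + 1) ∧
      ε₁ < ‖(Metric.infDist v X)⁻¹ • (v - P v) - (Metric.infDist w X)⁻¹ • (w - P w)‖ := by
    intro n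
    obtain ⟨v, hv, w, hw, h1, h2⟩ := hcon (1 / (n + 1)) (by positivity)
    exact ⟨v, hv, w, hw, h1, h2⟩
  choose v hvK w hwK hdvw hfar using hseq
  obtain ⟨vs, hvsK, φ, hφ, hvφ⟩ := hK.tendsto_subseq hvK
  obtain ⟨r, hr⟩ := hK.isBounded.subset_closedBall vs
  set C := X ∩ Metric.closedBall vs (τ'' + r + 1) with hC
  have hCcomp : IsCompact C := (isCompact_closedBall vs (τ'' + r + 1)).inter_left hXcl
  have hPin : ∀ u ∈ K, P u ∈ C := by
    intro u hu
    refine ⟨hPmem u, ?_⟩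
    rw [Metric.mem_closedBall]
    have h1 : dist (P u) u = Metric.infDist u X := by rw [dist_comm]; exact (hPdist u).symm
    have h2 : dist u vs ≤ r := hr hu
    calc dist (P u) vs ≤ dist (P u) u + dist u vs := dist_triangle _ _ _
      _ ≤ τ'' + r := by rw [h1]; exact add_le_add (hKhi u hu) h2
      _ ≤ τ'' + r + 1 := by linarith
  obtain ⟨q, hqC, ψ, hψ, hqlim⟩ :=
    hCcomp.tendsto_subseq (x := fun n => P (v (φ n))) (fun n => hPin _ (hvK (φ n)))
  obtain ⟨q', hq'C, ψ', hψ', hq'lim⟩ :=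
    hCcomp.tendsto_subseq (x := fun n => P (w (φ (ψ n)))) (fun n => hPin _ (hwK (φ (ψ n))))
  set θ : ℕ → ℕ := fun n => φ (ψ (ψ' n)) with hθ
  have hθmono : StrictMono θ := hφ.comp (hψ.comp hψ')
  have hvθ : Tendsto (fun n => v (θ n)) atTop (𝓝 vs) :=
    hvφ.comp ((hψ.comp hψ').tendsto_atTop)
  have hPvθ : Tendsto (fun n => P (v (θ n))) atTop (𝓝 q) := hqlim.comp hψ'.tendsto_atTop
  have hPwθ : Tendsto (fun n => P (w (θ n))) atTop (𝓝 q') := hq'lim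
  have hdθ : Tendsto (fun n => dist (v (θ n)) (w (θ n))) atTop (𝓝 0) := by
    apply squeeze_zero (fun n => dist_nonneg) (g := fun n : ℕ => 1 / ((n : ℝ) + 1))
    · intro n
      calc dist (v (θ n)) (w (θ n)) ≤ 1 / (θ n + 1) := hdvw (θ n)
        _ ≤ 1 / (n + 1) := by
            apply one_div_le_one_div_of_le (by positivity)
            have h2 : (n : ℝ) ≤ (θ n : ℝ) := Nat.cast_le.mpr hθmono.le_apply
            linarith
    · exact tendsto_one_div_add_atTop_nhds_zero_nat
  have hwθ : Tendsto (fun n => w (θ n)) atTop (𝓝 vs) := by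
    rw [tendsto_iff_dist_tendsto_zero]
    apply squeeze_zero (fun n => dist_nonneg)
      (g := fun n => dist (v (θ n)) (w (θ n)) + dist (v (θ n)) vs)
    · intro n
      calc dist (w (θ n)) vs ≤ dist (w (θ n)) (v (θ n)) + dist (v (θ n)) vs := dist_triangle _ _ _
        _ = dist (v (θ n)) (w (θ n)) + dist (v (θ n)) vs := by rw [dist_comm]
    · simpa using hdθ.add (tendsto_iff_dist_tendsto_zero.mp hvθ)
  have hinfv : Tendsto (fun n => Metric.infDist (v (θ n)) X) atTop (𝓝 (Metric.infDist vs X)) :=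
    ((Metric.continuous_infDist_pt X).tendsto vs).comp hvθ
  have hinfw : Tendsto (fun n => Metric.infDist (w (θ n)) X) atTop (𝓝 (Metric.infDist vs X)) :=
    ((Metric.continuous_infDist_pt X).tendsto vs).comp hwθ
  have hdq : dist vs q = Metric.infDist vs X := by
    have h1 : Tendsto (fun n => dist (v (θ n)) (P (v (θ n)))) atTop (𝓝 (dist vs q)) :=
      hvθ.dist hPvθ
    have h2 : (fun n => dist (v (θ n)) (P (v (θ n)))) = fun n => Metric.infDist (v (θ n)) X :=
      funext fun n => (hPdist _).symm
    rw [h2] at h1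
    exact tendsto_nhds_unique h1 hinfv
  have hdq' : dist vs q' = Metric.infDist vs X := by
    have h1 : Tendsto (fun n => dist (w (θ n)) (P (w (θ n)))) atTop (𝓝 (dist vs q')) :=
      hwθ.dist hPwθ
    have h2 : (fun n => dist (w (θ n)) (P (w (θ n)))) = fun n => Metric.infDist (w (θ n)) X :=
      funext fun n => (hPdist _).symm
    rw [h2] at h1
    exact tendsto_nhds_unique h1 hinfw
  have hqX : q ∈ X := hqC.1
  have hq'X : q' ∈ X := hq'C.1
  have hlt : Metric.infDist vs X < τ := lt_of_le_of_lt (hKhi vs hvsK) hτ''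
  obtain ⟨pp, -, hppu⟩ := hreach vs hlt
  have hqq' : q' = q := by
    rw [hppu q ⟨hqX, hdq.symm ▸ rfl⟩, hppu q' ⟨hq'X, hdq'.symm ▸ rfl⟩]
  have hne : Metric.infDist vs X ≠ 0 := ne_of_gt (lt_of_lt_of_le hρ (hKlo vs hvsK))
  have hNv : Tendsto (fun n => (Metric.infDist (v (θ n)) X)⁻¹ • (v (θ n) - P (v (θ n))))
      atTop (𝓝 ((Metric.infDist vs X)⁻¹ • (vs - q))) :=
    (hinfv.inv₀ hne).smul (hvθ.sub hPvθ)
  have hNw : Tendsto (fun n => (Metric.infDist (w (θ n)) X)⁻¹ • (w (θ n) - P (w (θ n))))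
      atTop (𝓝 ((Metric.infDist vs X)⁻¹ • (vs - q))) := by
    have := (hinfw.inv₀ hne).smul (hwθ.sub hPwθ)
    rwa [hqq'] at this
  have hdiff : Tendsto (fun n =>
      ‖(Metric.infDist (v (θ n)) X)⁻¹ • (v (θ n) - P (v (θ n)))
        - (Metric.infDist (w (θ n)) X)⁻¹ • (w (θ n) - P (w (θ n)))‖) atTop (𝓝 0) := by
    have h0 := (hNv.sub hNw).norm
    simpa using h0
  have hev : ∀ᶠ n in atTop, ‖(Metric.infDist (v (θ n)) X)⁻¹ • (v (θ n) - P (v (θ n)))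
      - (Metric.infDist (w (θ n)) X)⁻¹ • (w (θ n) - P (w (θ n)))‖ < ε₁ :=
    hdiff.eventually_lt_const hε₁
  obtain ⟨n, hn⟩ := hev.exists
  exact absurd (hfar (θ n)) (not_lt.2 hn.le)


set_option maxHeartbeats 2000000 in
/-- Federer-type lemma: under the unique-nearest-point hypothesis on the `τ`-tube, the open
ball of radius `τ` tangent at the projection point (on the side of `z`) contains no point of
`X`. Proved by following a discrete Euler scheme for the gradient flow of the distance
function. -/
lemma fed {d : ℕ} (X : Set (EuclideanSpace ℝ (Fin d))) (hXne : X.Nonempty)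
    (hXcl : IsClosed X) (τ : ℝ) (hτ : 0 < τ)
    (hreach : ∀ z : EuclideanSpace ℝ (Fin d), Metric.infDist z X < τ →
      ∃! p, p ∈ X ∧ dist z p = Metric.infDist z X)
    (z p : EuclideanSpace ℝ (Fin d)) (hpX : p ∈ X)
    (hzp : dist z p = Metric.infDist z X)
    (hd0 : 0 < dist z p) (hdτ : dist z p < τ)
    (x : EuclideanSpace ℝ (Fin d)) (hx : x ∈ X) :
    τ ≤ dist x (p + (τ / dist z p) • (z - p)) := by
  have main : ∀ t, dist z p ≤ t → t < τ → t ≤ dist x (p + (t / dist z p) • (z - p)) := by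
    intro t htδ htτ
    rcases eq_or_lt_of_le htδ with heq | hlt
    · have h1 : (t / dist z p) • (z - p) = z - p := by
        rw [← heq, div_self (ne_of_gt hd0), one_smul]
      rw [h1, show p + (z - p) = z by abel, dist_comm]
      calc t = dist z p := heq.symm
        _ = Metric.infDist z X := hzp
        _ ≤ dist z x := Metric.infDist_le_dist_of_mem hx
    · apply le_of_forall_pos_le_add
      intro ε' hε'
      set δ := dist z p with hδdef
      set T := t - δ with hTdef
      have hT : 0 < T := by rw [hTdef]; linarith
      set τ' := (t + τ) / 2 with hτ'def
      have htτ' : t ≤ τ' := by rw [hτ'def]; linarith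
      have hτ'τ : τ' < τ := by rw [hτ'def]; linarith
      choose P hPmem hPdist using fun w => hXcl.exists_infDist_eq_dist hXne w
      set Nf := fun w => (Metric.infDist w X)⁻¹ • (w - P w) with hNf
      set K := Metric.closedBall z (2 * τ) ∩
        {w | δ / 2 ≤ Metric.infDist w X ∧ Metric.infDist w X ≤ τ'} with hKdef
      have hKcomp : IsCompact K := by
        apply (isCompact_closedBall z (2 * τ)).inter_right
        exact IsClosed.inter (isClosed_le continuous_const (Metric.continuous_infDist_pt X))
          (isClosed_le (Metric.continuous_infDist_pt X) continuous_const)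
      set B := 2 * T * T * (δ + T) / δ with hB
      have hBpos : 0 < B := by rw [hB]; positivity
      set ε₁ := min (1/2) (min (ε' / (2 * (2 * T + 1))) ((ε' / 2) ^ 2 / (B + 1))) with hε₁def
      have hε₁pos : 0 < ε₁ := by
        apply lt_min (by norm_num)
        exact lt_min (by positivity) (by positivity)
      have hε₁le : ε₁ ≤ 1/2 := min_le_left _ _
      have hε₁a : ε₁ ≤ ε' / (2 * (2 * T + 1)) := le_trans (min_le_right _ _) (min_le_left _ _)
      have hε₁b : ε₁ ≤ (ε' / 2) ^ 2 / (B + 1) := le_trans (min_le_right _ _) (min_le_right _ _)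
      obtain ⟨η, hηpos, hηuc⟩ := nf_unif_cont hXcl τ hreach P hPmem hPdist K hKcomp
        (δ / 2) τ' (by positivity) hτ'τ (fun w hw => hw.2.1) (fun w hw => hw.2.2) ε₁ hε₁pos
      obtain ⟨n, hn⟩ := exists_nat_gt (max (T / η) (T / (δ / 2)))
      have hnpos : 0 < (n : ℝ) :=
        lt_trans (lt_of_lt_of_le (by positivity) (le_max_left (T / η) (T / (δ / 2)))) hn
      set h := T / n with hhdef
      have hhpos : 0 < h := div_pos hT hnpos
      have hhη : h ≤ η := by
        rw [hhdef, div_le_iff₀ hnpos]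
        have h2 : T / η < n := lt_of_le_of_lt (le_max_left _ _) hn
        rw [div_lt_iff₀ hηpos] at h2
        linarith
      have hhδ : h ≤ δ / 2 := by
        rw [hhdef, div_le_iff₀ hnpos]
        have h2 : T / (δ / 2) < n := lt_of_le_of_lt (le_max_right _ _) hn
        rw [div_lt_iff₀ (by positivity)] at h2
        linarith
      clear_value T τ' B ε₁ h
      set F := fun w => w + h • Nf w with hF
      set zs := fun k => F^[k] z with hzs
      have hzs0 : zs 0 = z := rfl
      have hzssucc : ∀ k, zs (k+1) = zs k + h • Nf (zs k) := by
        intro k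
        have := Function.iterate_succ_apply' F k z
        rw [hzs]
        simp only
        rw [this]
      have hdz : Metric.infDist z X = δ := hzp.symm
      have hNunit : ∀ w, 0 < Metric.infDist w X → ‖Nf w‖ = 1 := by
        intro w hw
        simp only [hNf]
        rw [norm_smul, Real.norm_eq_abs, abs_inv, abs_of_pos hw]
        have hww : ‖w - P w‖ = Metric.infDist w X := by
          rw [← dist_eq_norm]; exact (hPdist w).symm
        rw [hww, inv_mul_cancel₀ (ne_of_gt hw)]
      have hinv : ∀ k, k ≤ n →
          δ + k * h * (1 - ε₁) ≤ Metric.infDist (zs k) X ∧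
            Metric.infDist (zs k) X ≤ δ + k * h ∧ dist (zs k) z ≤ k * h := by
        intro k
        induction k with
        | zero => intro _; simp [hzs0, hdz]
        | succ k ih =>
          intro hk1
          obtain ⟨ih1, ih2, ih3⟩ := ih (Nat.le_of_succ_le hk1)
          have hk_nonneg : (0:ℝ) ≤ (k:ℝ) * h * (1 - ε₁) :=
            mul_nonneg (mul_nonneg (Nat.cast_nonneg k) hhpos.le) (by linarith)
          have hdk_pos : 0 < Metric.infDist (zs k) X := by linarith
          have hkh_le : (k:ℝ) * h ≤ T := by
            have hcast : (k:ℝ) ≤ (n:ℝ) := Nat.cast_le.mpr (Nat.le_of_succ_le hk1)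
            calc (k:ℝ) * h ≤ (n:ℝ) * h := mul_le_mul_of_nonneg_right hcast hhpos.le
              _ = T := by rw [hhdef]; field_simp
          have hk1h_le : ((k:ℝ) + 1) * h ≤ T := by
            have hcast : ((k:ℝ) + 1) ≤ (n:ℝ) := by exact_mod_cast Nat.cast_le.mpr hk1
            calc ((k:ℝ) + 1) * h ≤ (n:ℝ) * h := mul_le_mul_of_nonneg_right hcast hhpos.le
              _ = T := by rw [hhdef]; field_simp
          have hzkK : zs k ∈ K := by
            refine ⟨Metric.mem_closedBall.mpr ?_, ?_, ?_⟩
            · calc dist (zs k) z ≤ (k:ℝ) * h := ih3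
                _ ≤ T := hkh_le
                _ ≤ 2 * τ := by rw [hTdef]; linarith
            · linarith
            · calc Metric.infDist (zs k) X ≤ δ + (k:ℝ) * h := ih2
                _ ≤ δ + T := by linarith
                _ = t := by rw [hTdef]; ring
                _ ≤ τ' := htτ'
          have hdist_step : dist (zs (k+1)) (zs k) = h := by
            rw [hzssucc k, dist_eq_norm, add_sub_cancel_left, norm_smul, Real.norm_eq_abs,
              abs_of_pos hhpos, hNunit (zs k) hdk_pos, mul_one]
          have hlip1 : Metric.infDist (zs (k+1)) X ≤ Metric.infDist (zs k) X + h := by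
            calc Metric.infDist (zs (k+1)) X
                ≤ Metric.infDist (zs k) X + dist (zs (k+1)) (zs k) :=
                  Metric.infDist_le_infDist_add_dist
              _ = Metric.infDist (zs k) X + h := by rw [hdist_step]
          have hlip2 : Metric.infDist (zs k) X - h ≤ Metric.infDist (zs (k+1)) X := by
            have h5 : Metric.infDist (zs k) X
                ≤ Metric.infDist (zs (k+1)) X + dist (zs k) (zs (k+1)) :=
              Metric.infDist_le_infDist_add_dist
            rw [dist_comm, hdist_step] at h5
            linarith
          have hd'lo : δ / 2 ≤ Metric.infDist (zs (k+1)) X := by linarith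
          have hd'pos : 0 < Metric.infDist (zs (k+1)) X := by linarith
          have hz'K : zs (k+1) ∈ K := by
            refine ⟨Metric.mem_closedBall.mpr ?_, hd'lo, ?_⟩
            · calc dist (zs (k+1)) z ≤ dist (zs (k+1)) (zs k) + dist (zs k) z :=
                  dist_triangle _ _ _
                _ ≤ h + (k:ℝ) * h := by rw [hdist_step]; linarith
                _ = ((k:ℝ) + 1) * h := by ring
                _ ≤ T := hk1h_le
                _ ≤ 2 * τ := by rw [hTdef]; linarith
            · calc Metric.infDist (zs (k+1)) X ≤ Metric.infDist (zs k) X + h := hlip1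
                _ ≤ δ + (k:ℝ) * h + h := by linarith
                _ = δ + ((k:ℝ) + 1) * h := by ring
                _ ≤ δ + T := by linarith
                _ = t := by rw [hTdef]; ring
                _ ≤ τ' := htτ'
          have hucNN : ‖Nf (zs (k+1)) - Nf (zs k)‖ ≤ ε₁ := by
            have := hηuc (zs (k+1)) hz'K (zs k) hzkK (by rw [hdist_step]; exact hhη)
            simpa [hNf] using this
          have hstep : Metric.infDist (zs k) X + h * (1 - ε₁)
              ≤ Metric.infDist (zs (k+1)) X := by
            have hy'X : P (zs (k+1)) ∈ X := hPmem _
            have hd' : Metric.infDist (zs (k+1)) X = ‖zs (k+1) - P (zs (k+1))‖ := by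
              rw [hPdist (zs (k+1)), dist_eq_norm]
            have h1 : Metric.infDist (zs k) X ≤ ‖zs k - P (zs (k+1))‖ := by
              rw [← dist_eq_norm]; exact Metric.infDist_le_dist_of_mem hy'X
            have hrep : zs (k+1) - P (zs (k+1))
                = (Metric.infDist (zs (k+1)) X) • Nf (zs (k+1)) := by
              simp only [hNf]
              rw [smul_smul, mul_inv_cancel₀ (ne_of_gt hd'pos), one_smul]
            have h2 : zs k - P (zs (k+1))
                = (zs (k+1) - P (zs (k+1))) - h • Nf (zs k) := by
              rw [hzssucc k]; abel
            have h3 : ‖zs k - P (zs (k+1))‖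
                ≤ (Metric.infDist (zs (k+1)) X - h) + h * ε₁ := by
              rw [h2, hrep]
              have htri : ‖(Metric.infDist (zs (k+1)) X) • Nf (zs (k+1)) - h • Nf (zs k)‖
                  ≤ ‖(Metric.infDist (zs (k+1)) X) • Nf (zs (k+1)) - h • Nf (zs (k+1))‖
                    + ‖h • Nf (zs (k+1)) - h • Nf (zs k)‖ := by
                have := dist_triangle ((Metric.infDist (zs (k+1)) X) • Nf (zs (k+1)))
                  (h • Nf (zs (k+1))) (h • Nf (zs k))
                simpa [dist_eq_norm] using this
              have he1 : ‖(Metric.infDist (zs (k+1)) X) • Nf (zs (k+1))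
                  - h • Nf (zs (k+1))‖ = Metric.infDist (zs (k+1)) X - h := by
                rw [← sub_smul, norm_smul, Real.norm_eq_abs, hNunit _ hd'pos, mul_one,
                  abs_of_nonneg (by linarith)]
              have he2 : ‖h • Nf (zs (k+1)) - h • Nf (zs k)‖ ≤ h * ε₁ := by
                rw [← smul_sub, norm_smul, Real.norm_eq_abs, abs_of_pos hhpos]
                exact mul_le_mul_of_nonneg_left hucNN hhpos.le
              calc ‖(Metric.infDist (zs (k+1)) X) • Nf (zs (k+1)) - h • Nf (zs k)‖
                  ≤ _ + _ := htri
                _ ≤ (Metric.infDist (zs (k+1)) X - h) + h * ε₁ := by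
                    rw [he1]; exact add_le_add (le_refl _) he2
            linarith
          refine ⟨?_, ?_, ?_⟩
          · push_cast
            calc δ + ((k:ℝ) + 1) * h * (1 - ε₁)
                = (δ + (k:ℝ) * h * (1 - ε₁)) + h * (1 - ε₁) := by ring
              _ ≤ Metric.infDist (zs k) X + h * (1 - ε₁) := by linarith
              _ ≤ Metric.infDist (zs (k+1)) X := hstep
          · push_cast
            calc Metric.infDist (zs (k+1)) X ≤ Metric.infDist (zs k) X + h := hlip1
              _ ≤ δ + (k:ℝ) * h + h := by linarith
              _ = δ + ((k:ℝ) + 1) * h := by ring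
          · push_cast
            calc dist (zs (k+1)) z ≤ dist (zs (k+1)) (zs k) + dist (zs k) z :=
                dist_triangle _ _ _
              _ ≤ h + (k:ℝ) * h := by rw [hdist_step]; linarith
              _ = ((k:ℝ) + 1) * h := by ring
      obtain ⟨hfin1, hfin2, hfin3⟩ := hinv n le_rfl
      have hnhT : (n:ℝ) * h = T := by rw [hhdef]; field_simp
      set a := z - p with hadef
      set bb := zs n - z with hbbdef
      have hna : ‖a‖ = δ := by rw [hadef, ← dist_eq_norm]
      have habb : a + bb = zs n - p := by rw [hadef, hbbdef]; abel
      have h1 : δ + T * (1 - ε₁) ≤ ‖a + bb‖ := by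
        rw [habb, ← dist_eq_norm]
        calc δ + T * (1 - ε₁) = δ + (n:ℝ) * h * (1 - ε₁) := by rw [hnhT]
          _ ≤ Metric.infDist (zs n) X := hfin1
          _ ≤ dist (zs n) p := Metric.infDist_le_dist_of_mem hpX
      have h2 : ‖bb‖ ≤ T := by
        rw [hbbdef, ← dist_eq_norm]
        calc dist (zs n) z ≤ (n:ℝ) * h := hfin3
          _ = T := hnhT
      have h3 : T * (1 - ε₁) ≤ ‖bb‖ := by
        have h4 := norm_add_le a bb
        rw [hna] at h4
        linarith
      have hbbnn : 0 ≤ ‖bb‖ := norm_nonneg bb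
      have hη2' : T * ε₁ ≤ ‖a‖ + ‖bb‖ := by
        rw [hna]
        have h5 : T * ε₁ ≤ T * (1 - ε₁) := mul_le_mul_of_nonneg_left (by linarith) hT.le
        linarith
      have hpar := aux_par a bb (T * ε₁) (by rw [hna]; exact hd0)
        (mul_nonneg hT.le hε₁pos.le) hη2' (by rw [hna]; linarith)
      rw [hna] at hpar
      have hparB : ‖bb - (‖bb‖ / δ) • a‖ ^ 2 ≤ B * ε₁ := by
        have hBe : B * ε₁ = 2 * T * (T * ε₁) * (δ + T) / δ := by rw [hB]; ring
        calc ‖bb - (‖bb‖ / δ) • a‖ ^ 2 ≤ 2 * ‖bb‖ * (T * ε₁) * (δ + ‖bb‖) / δ := hpar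
          _ ≤ 2 * T * (T * ε₁) * (δ + T) / δ := by gcongr
          _ = B * ε₁ := hBe.symm
      have hsqrt : ‖bb - (‖bb‖ / δ) • a‖ ≤ ε' / 2 := by
        have h4 : ‖bb - (‖bb‖ / δ) • a‖ ^ 2 ≤ (ε' / 2) ^ 2 := by
          calc ‖bb - (‖bb‖ / δ) • a‖ ^ 2 ≤ B * ε₁ := hparB
            _ ≤ B * ((ε' / 2) ^ 2 / (B + 1)) := mul_le_mul_of_nonneg_left hε₁b hBpos.le
            _ ≤ (B + 1) * ((ε' / 2) ^ 2 / (B + 1)) :=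
                mul_le_mul_of_nonneg_right (by linarith) (by positivity)
            _ = (ε' / 2) ^ 2 := mul_div_cancel₀ _ (by positivity)
        have h5 := Real.sqrt_le_sqrt h4
        rwa [Real.sqrt_sq (norm_nonneg _), Real.sqrt_sq (by positivity)] at h5
      have hct : p + (t / δ) • (z - p) = z + (T / δ) • a := by
        have hzz : z = p + a := by rw [hadef]; abel
        have htd : t / δ = 1 + T / δ := by rw [hTdef]; field_simp; ring
        rw [← hadef, htd, add_smul, one_smul]
        rw [hzz]
        abel
      have hdev : ‖zs n - (z + (T / δ) • a)‖ ≤ ε' / 2 + T * ε₁ := by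
        have hss : ((‖bb‖ - T) / δ) • a = (‖bb‖ / δ) • a - (T / δ) • a := by
          rw [← sub_smul]
          congr 1
          ring
        have hsplit : zs n - (z + (T / δ) • a)
            = (bb - (‖bb‖ / δ) • a) + ((‖bb‖ - T) / δ) • a := by
          rw [hss, hbbdef]; abel
        rw [hsplit]
        have hb2 : ‖((‖bb‖ - T) / δ) • a‖ ≤ T * ε₁ := by
          rw [norm_smul, Real.norm_eq_abs, hna, abs_div, abs_of_pos hd0,
            div_mul_cancel₀ _ (ne_of_gt hd0)]
          rw [abs_of_nonpos (by linarith)]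
          linarith
        calc ‖(bb - (‖bb‖ / δ) • a) + ((‖bb‖ - T) / δ) • a‖
            ≤ ‖bb - (‖bb‖ / δ) • a‖ + ‖((‖bb‖ - T) / δ) • a‖ := norm_add_le _ _
          _ ≤ ε' / 2 + T * ε₁ := add_le_add hsqrt hb2
      have hTε : 2 * (T * ε₁) ≤ ε' / 2 := by
        have hc2 : 2 * T * ε₁ ≤ 2 * T * (ε' / (2 * (2 * T + 1))) :=
          mul_le_mul_of_nonneg_left hε₁a (by linarith)
        have hc3 : 2 * T * (ε' / (2 * (2 * T + 1))) ≤ ε' / 2 := by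
          rw [← mul_div_assoc, div_le_div_iff₀ (by positivity) (by norm_num : (0:ℝ) < 2)]
          have h7 : (0:ℝ) ≤ T * ε' := mul_nonneg hT.le hε'.le
          ring_nf
          nlinarith [h7, hε'.le]
        linarith
      have hfinal : t - ε' ≤ dist x (p + (t / δ) • (z - p)) := by
        rw [hct]
        have hd1 : Metric.infDist (zs n) X ≤ dist x (zs n) := by
          rw [dist_comm]; exact Metric.infDist_le_dist_of_mem hx
        have htri := dist_triangle x (z + (T / δ) • a) (zs n)
        have hd2 : dist (z + (T / δ) • a) (zs n) = ‖zs n - (z + (T / δ) • a)‖ := by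
          rw [dist_comm, dist_eq_norm]
        have hlow : δ + (n:ℝ) * h * (1 - ε₁) ≤ Metric.infDist (zs n) X := hfin1
        rw [hnhT] at hlow
        have hmid : δ + T * (1 - ε₁) - (ε' / 2 + T * ε₁) ≤ dist x (z + (T / δ) • a) := by
          have e1 : δ + T * (1 - ε₁) ≤ dist x (zs n) := le_trans hlow hd1
          have e2 : T * (1 - ε₁) = T - T * ε₁ := by ring
          linarith [hdev, e1, e2, htri]
        have hTt : δ + T = t := by rw [hTdef]; ring
        have hXr : T * (1 - ε₁) = T - T * ε₁ := by ring
        linarith [hTε, hXr, hmid, hTt]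
      linarith
  by_contra hcon
  push_neg at hcon
  set D := dist x (p + (τ / dist z p) • (z - p)) with hD
  set ε := τ - D with hε
  have hεpos : 0 < ε := by rw [hε]; linarith
  set t := max (dist z p) (τ - ε / 3) with ht
  have ht1 : dist z p ≤ t := le_max_left _ _
  have ht2 : t < τ := max_lt hdτ (by linarith)
  have ht3 : τ - ε / 3 ≤ t := le_max_right _ _
  clear_value D ε t
  have hmain := main t ht1 ht2
  have hdd : dist (p + (τ / dist z p) • (z - p)) (p + (t / dist z p) • (z - p)) = τ - t := by
    rw [dist_eq_norm]
    have he : (p + (τ / dist z p) • (z - p)) - (p + (t / dist z p) • (z - p))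
        = ((τ - t) / dist z p) • (z - p) := by
      have h6 : (τ - t) / dist z p = τ / dist z p - t / dist z p := by ring
      rw [h6, sub_smul]
      abel
    rw [he, norm_smul, Real.norm_eq_abs, ← dist_eq_norm,
      abs_of_nonneg (div_nonneg (by linarith) hd0.le),
      div_mul_cancel₀ _ (ne_of_gt hd0)]
  have hchain : t ≤ D + (τ - t) := by
    have htri := dist_triangle x (p + (τ / dist z p) • (z - p))
      (p + (t / dist z p) • (z - p))
    rw [hdd] at htri
    linarith [hmain]
  linarith [hchain, ht3, hεpos, hcon, hε.le, hε.ge]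

set_option maxHeartbeats 4000000 in
/-- Two approximate projections of small enclosing-ball centers of a simplex
`σ` and of a face `ς ⊆ σ` are close to each other. -/
theorem stmt15 (d : ℕ) (X : Set (EuclideanSpace ℝ (Fin d))) (hXne : X.Nonempty)
    (hXcl : IsClosed X) (τ : ℝ) (hτ : 0 < τ)
    (hreach : ∀ z : EuclideanSpace ℝ (Fin d), Metric.infDist z X < τ →
      ∃! p, p ∈ X ∧ dist z p = Metric.infDist z X)
    (σ : Finset (EuclideanSpace ℝ (Fin d))) (hσne : σ.Nonempty) (εσ : ℝ)
    (hεσ : εσ = σ.sup' hσne (fun q => Metric.infDist q X))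
    (b : EuclideanSpace ℝ (Fin d)) (rσ : ℝ) (hrσ : 0 < rσ)
    (hb : ∀ q ∈ σ, ‖b - q‖ ≤ rσ) (hrτ : rσ < τ - εσ)
    (ς : Finset (EuclideanSpace ℝ (Fin d))) (hςσ : ς ⊆ σ) (hςne : ς.Nonempty)
    (b' : EuclideanSpace ℝ (Fin d)) (hb'hull : b' ∈ convexHull ℝ (ς : Set (EuclideanSpace ℝ (Fin d))))
    (hb' : ∀ q ∈ ς, ‖b' - q‖ ≤ rσ)
    (pb : EuclideanSpace ℝ (Fin d)) (hpbX : pb ∈ X) (hpb : dist b pb = Metric.infDist b X)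
    (pb' : EuclideanSpace ℝ (Fin d)) (hpb'X : pb' ∈ X) (hpb' : dist b' pb' = Metric.infDist b' X)
    (ε : ℝ) (hε : 0 < ε) (y y' : EuclideanSpace ℝ (Fin d))
    (hy : ‖y - pb‖ < ε) (hy' : ‖y' - pb'‖ < ε) :
    ‖y' - y‖ < Real.sqrt (2 * τ * (rσ ^ 2 + εσ * (2 * τ - εσ)) /
        (τ + Real.sqrt (τ ^ 2 - (rσ ^ 2 + εσ * (2 * τ - εσ))))) + 2 * ε := by
  -- basic scalar facts
  obtain ⟨q0, hq0ς⟩ := hςne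
  have hq0σ : q0 ∈ σ := hςσ hq0ς
  have hεσ0 : 0 ≤ εσ := by
    rw [hεσ]
    exact le_trans Metric.infDist_nonneg
      (Finset.le_sup' (fun q => Metric.infDist q X) hq0σ)
  have hεστ : εσ < τ := by linarith
  have hqd : ∀ q ∈ σ, Metric.infDist q X ≤ εσ := by
    intro q hq; rw [hεσ]; exact Finset.le_sup' (fun q => Metric.infDist q X) hq
  have hLpos : 0 < rσ ^ 2 + εσ * (2 * τ - εσ) := by nlinarith
  have hLτ : rσ ^ 2 + εσ * (2 * τ - εσ) < τ ^ 2 := by nlinarith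
  set s := Real.sqrt (τ ^ 2 - (rσ ^ 2 + εσ * (2 * τ - εσ))) with hs
  have hs0 : 0 ≤ s := Real.sqrt_nonneg _
  have hs2 : s ^ 2 = τ ^ 2 - (rσ ^ 2 + εσ * (2 * τ - εσ)) := by
    rw [hs]; exact Real.sq_sqrt (by linarith)
  clear_value s
  have hsτ : s ≤ τ := by nlinarith [hs2, hs0]
  -- nearest point selection
  choose P hPmem hPdist using fun w => hXcl.exists_infDist_eq_dist hXne w
  -- convex representation of b'
  rw [Finset.convexHull_eq] at hb'hull
  obtain ⟨lam, hlam0, hlam1, hlamc⟩ := hb'hull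
  have hb'rep : ∑ q ∈ ς, lam q • q = b' := by
    rw [← hlamc, Finset.centerMass_eq_of_sum_1 _ _ hlam1]
    simp [id]
  have hcombo : ∀ v : EuclideanSpace ℝ (Fin d), ∑ q ∈ ς, lam q • (q - v) = b' - v := by
    intro v
    have e1 : ∑ q ∈ ς, lam q • (q - v) = (∑ q ∈ ς, lam q • q) - (∑ q ∈ ς, lam q) • v := by
      rw [Finset.sum_smul]
      rw [← Finset.sum_sub_distrib]
      apply Finset.sum_congr rfl
      intro q hq
      rw [smul_sub]
    rw [e1, hb'rep, hlam1, one_smul]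
  -- tube membership of b and b'
  have hδ'le : Metric.infDist b' X ≤ rσ + εσ := by
    calc Metric.infDist b' X ≤ dist b' (P q0) := Metric.infDist_le_dist_of_mem (hPmem q0)
      _ ≤ dist b' q0 + dist q0 (P q0) := dist_triangle _ _ _
      _ ≤ rσ + εσ := by
          apply add_le_add
          · rw [dist_eq_norm]; exact hb' q0 hq0ς
          · exact le_trans (le_of_eq (hPdist q0).symm) (hqd q0 hq0σ)
  have hδle : Metric.infDist b X ≤ rσ + εσ := by
    calc Metric.infDist b X ≤ dist b (P q0) := Metric.infDist_le_dist_of_mem (hPmem q0)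
      _ ≤ dist b q0 + dist q0 (P q0) := dist_triangle _ _ _
      _ ≤ rσ + εσ := by
          apply add_le_add
          · rw [dist_eq_norm]; exact hb q0 hq0σ
          · exact le_trans (le_of_eq (hPdist q0).symm) (hqd q0 hq0σ)
  have hδ'τ : Metric.infDist b' X < τ := lt_of_le_of_lt hδ'le (by linarith)
  have hδτ : Metric.infDist b X < τ := lt_of_le_of_lt hδle (by linarith)
  -- STEP A : ‖b - pb'‖² ≤ L
  have hN : ‖b - pb'‖ ^ 2 ≤ rσ ^ 2 + εσ * (2 * τ - εσ) := by
    rcases eq_or_lt_of_le (Metric.infDist_nonneg (x := b') (s := X)) with hz | hz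
    · -- b' itself lies on X, pb' = b'
      have hb'pb' : b' = pb' := by
        rw [← dist_eq_zero (x := b') (y := pb'), hpb', ← hz]
      have hrepr : b - b' = ∑ q ∈ ς, lam q • (b - q) := by
        have e1 : ∑ q ∈ ς, lam q • (b - q) = (∑ q ∈ ς, lam q) • b - (∑ q ∈ ς, lam q • q) := by
          rw [Finset.sum_smul, ← Finset.sum_sub_distrib]
          apply Finset.sum_congr rfl
          intro q hq
          rw [smul_sub]
        rw [e1, hb'rep, hlam1, one_smul]
      have hbb : ‖b - b'‖ ≤ rσ := by
        rw [hrepr]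
        calc ‖∑ q ∈ ς, lam q • (b - q)‖ ≤ ∑ q ∈ ς, ‖lam q • (b - q)‖ := norm_sum_le _ _
          _ ≤ ∑ q ∈ ς, lam q * rσ := by
              apply Finset.sum_le_sum
              intro q hq
              rw [norm_smul, Real.norm_eq_abs, abs_of_nonneg (hlam0 q hq)]
              exact mul_le_mul_of_nonneg_left (hb q (hςσ hq)) (hlam0 q hq)
          _ = rσ := by rw [← Finset.sum_mul, hlam1, one_mul]
      rw [← hb'pb']
      nlinarith [hbb, norm_nonneg (b - b')]
    · -- proper projection: use the tangent ball at b'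
      have hδ'pos : 0 < dist b' pb' := by rw [hpb']; exact hz
      have hδ'ne : dist b' pb' ≠ 0 := ne_of_gt hδ'pos
      have hball : ∀ xx ∈ X, τ ≤ dist xx (pb' + (τ / dist b' pb') • (b' - pb')) :=
        fun xx hxx => fed X hXne hXcl τ hτ hreach b' pb' hpb'X hpb' hδ'pos
          (by rw [hpb']; exact hδ'τ) xx hxx
      have hvert : ∀ q ∈ ς, ⟪q - pb', (τ / dist b' pb') • (b' - pb') - (b - pb')⟫
          ≤ (εσ * (2 * τ - εσ) + rσ ^ 2 - ‖b - pb'‖ ^ 2) / 2 := by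
        intro q hq
        have h1 : τ ≤ dist (P q) (pb' + (τ / dist b' pb') • (b' - pb')) :=
          hball (P q) (hPmem q)
        have h2 : dist q (P q) ≤ εσ :=
          le_trans (le_of_eq (hPdist q).symm) (hqd q (hςσ hq))
        have h3 : τ - εσ ≤ dist q (pb' + (τ / dist b' pb') • (b' - pb')) := by
          have htr2 := dist_triangle (P q) q (pb' + (τ / dist b' pb') • (b' - pb'))
          have hcm : dist (P q) q = dist q (P q) := dist_comm _ _
          linarith
        have h4 : (τ - εσ) ^ 2 ≤ dist q (pb' + (τ / dist b' pb') • (b' - pb')) ^ 2 :=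
          pow_le_pow_left₀ (by linarith) h3 2
        have h5 : dist q (pb' + (τ / dist b' pb') • (b' - pb'))
            = ‖(q - pb') - (τ / dist b' pb') • (b' - pb')‖ := by
          rw [dist_eq_norm]
          congr 1
          abel
        have e : ‖(τ / dist b' pb') • (b' - pb')‖ ^ 2 = τ ^ 2 := by
          rw [norm_smul, Real.norm_eq_abs, abs_of_nonneg (div_nonneg hτ.le dist_nonneg),
            show ‖b' - pb'‖ = dist b' pb' from (dist_eq_norm _ _).symm, mul_pow]
          field_simp
        have h6 : ‖(q - pb') - (τ / dist b' pb') • (b' - pb')‖ ^ 2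
            = ‖q - pb'‖ ^ 2 - 2 * ((τ / dist b' pb') * ⟪q - pb', b' - pb'⟫) + τ ^ 2 := by
          rw [norm_sub_sq_real, real_inner_smul_right, e]
        have h10 : ‖(b - pb') - (q - pb')‖ ^ 2 ≤ rσ ^ 2 := by
          rw [show (b - pb') - (q - pb') = b - q by abel]
          exact pow_le_pow_left₀ (norm_nonneg _) (hb q (hςσ hq)) 2
        have h11 : ‖(b - pb') - (q - pb')‖ ^ 2
            = ‖b - pb'‖ ^ 2 - 2 * ⟪b - pb', q - pb'⟫ + ‖q - pb'‖ ^ 2 :=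
          norm_sub_sq_real _ _
        have h12 : ⟪q - pb', (τ / dist b' pb') • (b' - pb') - (b - pb')⟫
            = (τ / dist b' pb') * ⟪q - pb', b' - pb'⟫ - ⟪b - pb', q - pb'⟫ := by
          rw [inner_sub_right, real_inner_smul_right, real_inner_comm (q - pb') (b - pb')]
        rw [h12]
        rw [h5, h6] at h4
        nlinarith [h4, h10, h11]
      have hkeyW : ∀ W : EuclideanSpace ℝ (Fin d),
          (∀ q ∈ ς, ⟪q - pb', W⟫ ≤ (εσ * (2 * τ - εσ) + rσ ^ 2 - ‖b - pb'‖ ^ 2) / 2) →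
          ⟪b' - pb', W⟫ ≤ (εσ * (2 * τ - εσ) + rσ ^ 2 - ‖b - pb'‖ ^ 2) / 2 := by
        intro W hW
        rw [← hcombo pb', sum_inner]
        calc ∑ q ∈ ς, ⟪lam q • (q - pb'), W⟫
            = ∑ q ∈ ς, lam q * ⟪q - pb', W⟫ := by
              apply Finset.sum_congr rfl
              intro q hq
              rw [real_inner_smul_left]
          _ ≤ ∑ q ∈ ς, lam q * ((εσ * (2 * τ - εσ) + rσ ^ 2 - ‖b - pb'‖ ^ 2) / 2) :=
              Finset.sum_le_sum (fun q hq =>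
                mul_le_mul_of_nonneg_left (hW q hq) (hlam0 q hq))
          _ = (εσ * (2 * τ - εσ) + rσ ^ 2 - ‖b - pb'‖ ^ 2) / 2 := by
              rw [← Finset.sum_mul, hlam1, one_mul]
      have hsum := hkeyW ((τ / dist b' pb') • (b' - pb') - (b - pb')) hvert
      have hlhs : ⟪b' - pb', (τ / dist b' pb') • (b' - pb') - (b - pb')⟫
          = (τ / dist b' pb') * ‖b' - pb'‖ ^ 2 - ⟪b' - pb', b - pb'⟫ := by
        rw [inner_sub_right, real_inner_smul_right, real_inner_self_eq_norm_sq]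
      have h7 : ‖b' - pb'‖ = dist b' pb' := (dist_eq_norm _ _).symm
      have hτδ : (τ / dist b' pb') * (dist b' pb') ^ 2 = τ * dist b' pb' := by
        field_simp
      rw [hlhs, h7, hτδ] at hsum
      -- hsum : τ * δ' - ⟪b'-pb', b-pb'⟫ ≤ (E + rσ² - N²)/2
      have hCS : ⟪b' - pb', b - pb'⟫ ≤ dist b' pb' * ‖b - pb'‖ := by
        calc ⟪b' - pb', b - pb'⟫ ≤ ‖b' - pb'‖ * ‖b - pb'‖ := real_inner_le_norm _ _
          _ = dist b' pb' * ‖b - pb'‖ := by rw [h7]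
      have hδ'a : dist b' pb' ≤ rσ + εσ := by rw [hpb']; exact hδ'le
      have hNτ : ‖b - pb'‖ ≤ τ := by
        by_contra hNg
        push_neg at hNg
        have hp1 : 0 < ‖b - pb'‖ - τ := by linarith
        have hp2 : 0 < ‖b - pb'‖ + τ - 2 * (rσ + εσ) := by linarith
        have hp3 : 0 < (τ - εσ - rσ) * (τ - εσ + rσ) :=
          mul_pos (by linarith) (by linarith)
        nlinarith [hsum, hCS, mul_pos hp1 hp2, hp3,
          mul_nonneg (sub_nonneg.2 hδ'a) hp1.le]
      nlinarith [hsum, hCS, mul_nonneg (le_of_lt hδ'pos) (sub_nonneg.2 hNτ)]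
  -- STEP B : ‖pb' - pb‖² ≤ 2τ(τ - s)
  have hA : ‖pb' - pb‖ ^ 2 ≤ 2 * τ * (τ - s) := by
    rcases eq_or_lt_of_le (Metric.infDist_nonneg (x := b) (s := X)) with hz | hz
    · have hbpb : b = pb := by
        rw [← dist_eq_zero (x := b) (y := pb), hpb, ← hz]
      have : ‖pb' - pb‖ ^ 2 = ‖b - pb'‖ ^ 2 := by
        rw [← hbpb, norm_sub_rev]
      rw [this]
      nlinarith [hN, hs2, hs0, hsτ]
    · have hδpos : 0 < dist b pb := by rw [hpb]; exact hz
      have hδne : dist b pb ≠ 0 := ne_of_gt hδpos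
      have hδτ2 : dist b pb < τ := by rw [hpb]; exact hδτ
      have h1 : τ ≤ dist pb' (pb + (τ / dist b pb) • (b - pb)) :=
        fed X hXne hXcl τ hτ hreach b pb hpbX hpb hδpos hδτ2 pb' hpb'X
      have h5 : dist pb' (pb + (τ / dist b pb) • (b - pb))
          = ‖(pb' - pb) - (τ / dist b pb) • (b - pb)‖ := by
        rw [dist_eq_norm]
        congr 1
        abel
      have e : ‖(τ / dist b pb) • (b - pb)‖ ^ 2 = τ ^ 2 := by
        rw [norm_smul, Real.norm_eq_abs, abs_of_nonneg (div_nonneg hτ.le dist_nonneg),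
          show ‖b - pb‖ = dist b pb from (dist_eq_norm _ _).symm, mul_pow]
        field_simp
      have h6 : ‖(pb' - pb) - (τ / dist b pb) • (b - pb)‖ ^ 2
          = ‖pb' - pb‖ ^ 2 - 2 * ((τ / dist b pb) * ⟪pb' - pb, b - pb⟫) + τ ^ 2 := by
        rw [norm_sub_sq_real, real_inner_smul_right, e]
      have h4 : τ ^ 2 ≤ ‖pb' - pb‖ ^ 2 - 2 * ((τ / dist b pb) * ⟪pb' - pb, b - pb⟫) + τ ^ 2 := by
        rw [← h6, ← h5]
        exact pow_le_pow_left₀ hτ.le h1 2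
      -- inner ≤ δ A² / (2τ)  (in product form)
      have hinner : 2 * (τ / dist b pb) * ⟪pb' - pb, b - pb⟫ ≤ 0 ∨ True := Or.inr trivial
      have hNrel : ‖b - pb'‖ ^ 2
          = dist b pb ^ 2 - 2 * ⟪pb' - pb, b - pb⟫ + ‖pb' - pb‖ ^ 2 := by
        have e2 : b - pb' = (b - pb) - (pb' - pb) := by abel
        rw [e2, norm_sub_sq_real, real_inner_comm,
          show ‖b - pb‖ = dist b pb from (dist_eq_norm _ _).symm]
      -- from h4 : (τ/δ) * inner ≤ A²/2, i.e. 2τ * inner ≤ δ * A²  (multiply by δ > 0)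
      have hkey : 2 * τ * ⟪pb' - pb, b - pb⟫ ≤ dist b pb * ‖pb' - pb‖ ^ 2 := by
        have h8 : 2 * ((τ / dist b pb) * ⟪pb' - pb, b - pb⟫) ≤ ‖pb' - pb‖ ^ 2 := by
          linarith
        have h9 := mul_le_mul_of_nonneg_left h8 hδpos.le
        have h10 : dist b pb * (2 * ((τ / dist b pb) * ⟪pb' - pb, b - pb⟫))
            = 2 * τ * ⟪pb' - pb, b - pb⟫ := by
          field_simp
        rw [h10] at h9
        linarith [h9]
      -- A² (τ - δ) ≤ τ (L - δ²) ≤ 2τ(τ-s)(τ-δ)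
      have hmain2 : ‖pb' - pb‖ ^ 2 * (τ - dist b pb) ≤ 2 * τ * (τ - s) * (τ - dist b pb) := by
        have hup : τ * ‖b - pb'‖ ^ 2 ≤ τ * (rσ ^ 2 + εσ * (2 * τ - εσ)) :=
          mul_le_mul_of_nonneg_left hN hτ.le
        have hls : rσ ^ 2 + εσ * (2 * τ - εσ) - dist b pb ^ 2
            ≤ 2 * (τ - s) * (τ - dist b pb) := by
          nlinarith [sq_nonneg (τ - s - dist b pb), hs2]
        nlinarith [hNrel, hkey, hup, hls, hτ.le, hδpos.le, hδτ2]
      have hpos : 0 < τ - dist b pb := by linarith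
      exact le_of_mul_le_mul_right hmain2 hpos
  -- A ≤ sqrt(2τL/(τ+s))
  have hfrac : 2 * τ * (τ - s) = 2 * τ * (rσ ^ 2 + εσ * (2 * τ - εσ)) / (τ + s) := by
    rw [eq_div_iff (by positivity)]
    nlinarith [hs2]
  have hAs : ‖pb' - pb‖ ≤ Real.sqrt (2 * τ * (rσ ^ 2 + εσ * (2 * τ - εσ)) / (τ + s)) := by
    rw [Real.le_sqrt (norm_nonneg _) (by positivity)]
    rw [← hfrac]
    exact hA
  -- final triangle inequality
  have htr : ‖y' - y‖ ≤ ‖y' - pb'‖ + ‖pb' - pb‖ + ‖pb - y‖ := by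
    calc ‖y' - y‖ = ‖(y' - pb') + ((pb' - pb) + (pb - y))‖ := by congr 1; abel
      _ ≤ ‖y' - pb'‖ + ‖(pb' - pb) + (pb - y)‖ := norm_add_le _ _
      _ ≤ ‖y' - pb'‖ + (‖pb' - pb‖ + ‖pb - y‖) := by
          linarith [norm_add_le (pb' - pb) (pb - y)]
      _ = ‖y' - pb'‖ + ‖pb' - pb‖ + ‖pb - y‖ := by ring
  have hpy : ‖pb - y‖ = ‖y - pb‖ := norm_sub_rev _ _
  rw [hpy] at htr
  linarith [htr, hAs, hy, hy']
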